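/- arXiv:1909.05376 — 7 statements merged into one kernel-verified Lean document; each statement's English description precedes it below -/
import Mathlib

section
/- Let K ⊆ L1 ⊆ L2 and K ⊆ L3 be Galois extensions of a field K (inside a fixed algebraic closure). Then the compositum L1(L2 ∩ L3) equals the intersection L2 ∩ (L1·L3). -/
/-!
For finite Galois extensions this is Dedekind's modular law `H₁ ∩ H₂H₃ = H₂(H₁ ∩ H₃)` for
subgroups `H₂ ≤ H₁` with `H₂` normal, transported through the Galois correspondence (the fixing
group of `L2` is normal because `L2/K` is Galois). The general case reduces to it: an element of
`L2 ∩ L1L3` is generated by finitely many elements of `L1` and of `L3`, and these lie in finite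
Galois subextensions of `L2` and `L3`.
-/

theorem Subgroup.inf_sup_eq_sup_inf_of_normal {G : Type*} [Group G] {H₁ H₂ : Subgroup G}
    [H₂.Normal] (h : H₂ ≤ H₁) (H₃ : Subgroup G) :
    H₁ ⊓ (H₂ ⊔ H₃) = H₂ ⊔ (H₁ ⊓ H₃) := by
  apply SetLike.coe_injective
  rw [coe_inf, normal_mul, normal_mul, inf_comm H₁, mul_inf_assoc H₂ H₃ H₁ h, Set.inter_comm]

namespace IntermediateField

variable {K Ω : Type*} [Field K] [Field Ω] [Algebra K Ω]

theorem sup_inf_eq_inf_sup_of_isGalois_of_finiteDimensional [FiniteDimensional K Ω]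
    [IsGalois K Ω] {E₁ E₂ : IntermediateField K Ω} [IsGalois K E₂] (h : E₁ ≤ E₂)
    (E₃ : IntermediateField K Ω) :
    E₁ ⊔ (E₂ ⊓ E₃) = E₂ ⊓ (E₁ ⊔ E₃) := by
  apply (IsGalois.intermediateFieldEquivSubgroup (F := K) (E := Ω)).injective
  simp only [OrderIso.map_sup, OrderIso.map_inf]
  exact Subgroup.inf_sup_eq_sup_inf_of_normal (fixingSubgroup_le h) E₃.fixingSubgroup

theorem sup_inf_eq_inf_sup_of_finiteDimensional {E₁ E₂ : IntermediateField K Ω}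
    [FiniteDimensional K E₂] [IsGalois K E₂] (h : E₁ ≤ E₂) (E₃ : IntermediateField K Ω)
    [FiniteDimensional K E₃] [IsGalois K E₃] :
    E₁ ⊔ (E₂ ⊓ E₃) = E₂ ⊓ (E₁ ⊔ E₃) := by
  have h₂ : E₂ ≤ E₂ ⊔ E₃ := le_sup_left
  have h₃ : E₃ ≤ E₂ ⊔ E₃ := le_sup_right
  have h₁₂ : restrict (h.trans h₂) ≤ restrict h₂ := fun x hx ↦
    (mem_restrict h₂ x).2 (h ((mem_restrict _ x).1 hx))
  have : IsGalois K (restrict h₂) := IsGalois.of_algEquiv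
    ((liftAlgEquiv (restrict h₂)).trans (equivOfEq (lift_restrict h₂))).symm
  simpa only [lift_sup, lift_inf, lift_restrict] using
    congrArg lift (sup_inf_eq_inf_sup_of_isGalois_of_finiteDimensional h₁₂ (restrict h₃))

theorem exists_finiteDimensional_isGalois_le_of_finite (L : IntermediateField K Ω)
    [IsGalois K L] {S : Set Ω} (hS : S.Finite) (hSL : S ⊆ L) :
    ∃ A : IntermediateField K Ω, FiniteDimensional K A ∧ IsGalois K A ∧ A ≤ L ∧ S ⊆ A := by
  have : Finite ((↑) ⁻¹' S : Set L) := (hS.preimage Subtype.val_injective.injOn).to_subtype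
  set A := FiniteGaloisIntermediateField.adjoin K ((↑) ⁻¹' S : Set L)
  refine ⟨lift A.toIntermediateField, .equiv (liftAlgEquiv _).toLinearEquiv,
    .of_algEquiv (liftAlgEquiv _), lift_le _, fun s hs ↦ ?_⟩
  exact (mem_lift ⟨s, hSL hs⟩).2 (FiniteGaloisIntermediateField.subset_adjoin K _ hs)

theorem exists_finite_subset_of_mem_sup {E₁ E₂ : IntermediateField K Ω} {x : Ω}
    (hx : x ∈ E₁ ⊔ E₂) : ∃ S₁ S₂ : Set Ω, S₁.Finite ∧ S₁ ⊆ E₁ ∧ S₂.Finite ∧ S₂ ⊆ E₂ ∧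
      x ∈ adjoin K (S₁ ∪ S₂) := by
  obtain ⟨T, hT, hxT⟩ := exists_finset_of_mem_adjoin hx
  refine ⟨T ∩ E₁, T ∩ E₂, T.finite_toSet.inter_of_left _, Set.inter_subset_right,
    T.finite_toSet.inter_of_left _, Set.inter_subset_right, adjoin.mono K _ _ ?_ hxT⟩
  rw [← Set.inter_union_distrib_left]
  exact Set.subset_inter subset_rfl hT

theorem sup_inf_eq_inf_sup_of_isGalois {E₁ E₂ : IntermediateField K Ω} [IsGalois K E₂]
    (h : E₁ ≤ E₂) (E₃ : IntermediateField K Ω) [IsGalois K E₃] :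
    E₁ ⊔ (E₂ ⊓ E₃) = E₂ ⊓ (E₁ ⊔ E₃) := by
  refine le_antisymm (sup_le (le_inf h le_sup_left) (inf_le_inf_left _ le_sup_right))
    fun x ⟨hx₂, hx₁₃⟩ ↦ ?_
  obtain ⟨S₁, S₃, hS₁, hS₁E₁, hS₃, hS₃E₃, hx⟩ := exists_finite_subset_of_mem_sup hx₁₃
  obtain ⟨C, _, _, hCE₂, hxS₁C⟩ := exists_finiteDimensional_isGalois_le_of_finite E₂
    (hS₁.insert x) (Set.insert_subset hx₂ (hS₁E₁.trans h))
  obtain ⟨A, _, _, hAE₃, hS₃A⟩ := exists_finiteDimensional_isGalois_le_of_finite E₃ hS₃ hS₃E₃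
  have hS₁C : adjoin K S₁ ≤ C := adjoin_le_iff.2 ((Set.subset_insert x S₁).trans hxS₁C)
  have hxC : x ∈ C ⊓ (adjoin K S₁ ⊔ A) := by
    refine ⟨hxS₁C (Set.mem_insert x S₁), ?_⟩
    rw [adjoin_union] at hx
    exact sup_le_sup_left (adjoin_le_iff.2 hS₃A) _ hx
  rw [← sup_inf_eq_inf_sup_of_finiteDimensional hS₁C] at hxC
  exact sup_le_sup (adjoin_le_iff.2 hS₁E₁) (inf_le_inf hCE₂ hAE₃) hxC

end IntermediateField

theorem stmt0_general (K : Type*) [Field K]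
    (L1 L2 L3 : IntermediateField K (AlgebraicClosure K))
    [IsGalois K L2] [IsGalois K L3]
    (h12 : L1 ≤ L2) :
    L1 ⊔ (L2 ⊓ L3) = L2 ⊓ (L1 ⊔ L3) :=
  IntermediateField.sup_inf_eq_inf_sup_of_isGalois h12 L3

theorem stmt0 (K : Type*) [Field K]
    (L1 L2 L3 : IntermediateField K (AlgebraicClosure K))
    [IsGalois K L1] [IsGalois K L2] [IsGalois K L3]
    (h12 : L1 ≤ L2) :
    L1 ⊔ (L2 ⊓ L3) = L2 ⊓ (L1 ⊔ L3) :=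
  stmt0_general K L1 L2 L3 h12
end

section
/- Let 1 → A → G → Q → 1 be a short exact sequence of groups with A abelian, so that Q acts on A by conjugation. Let [A,Q] be the subgroup of A generated by elements of the form q·a − a (written additively) for a ∈ A and q ∈ Q. Then the quotient A/[A,Q] surjects onto the kernel of the induced map G^ab → Q^ab between abelianizations. -/
/-!
The map `a ↦ [a]` from `A` to `G^ab` lands in the kernel of `G^ab → Q^ab`, and it is onto
that kernel: if `[g]` dies in `Q^ab`, then the image of `g` in `Q` is a product of
commutators, which lift to a product of commutators `c` in `G`, and `g c⁻¹ ∈ A` has the same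
class as `g`. Elements `g a g⁻¹ a⁻¹` are commutators of `G`, so they vanish in `G^ab`.
-/

namespace Abelianization

variable {G H : Type*} [Group G] [Group H]

theorem ker_map_of_surjective {f : G →* H} (hf : Function.Surjective f) :
    (map f).ker = f.ker.map of := by
  apply le_antisymm
  · intro x hx
    obtain ⟨g, rfl⟩ : ∃ g, of g = x := QuotientGroup.mk_surjective x
    have hfg : f g ∈ (commutator G).map f := by
      rw [map_commutator_eq, MonoidHom.range_eq_top.mpr hf, ← commutator_def, ← ker_of,
        MonoidHom.mem_ker, ← map_of]
      exact hx
    obtain ⟨c, hc, hcg⟩ := hfg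
    refine ⟨g * c⁻¹, ?_, ?_⟩
    · rw [SetLike.mem_coe, MonoidHom.mem_ker, map_mul, map_inv, hcg, mul_inv_cancel]
    · have hc1 : of c = 1 := by rwa [← MonoidHom.mem_ker, ker_of]
      rw [map_mul, map_inv, hc1, inv_one, mul_one]
  · rintro _ ⟨g, hg, rfl⟩
    rw [MonoidHom.mem_ker, map_of, hg, map_one]

theorem range_of_comp_subtype_eq_ker_map_mk' (N : Subgroup G) [N.Normal] :
    (of.comp N.subtype).range = (map (QuotientGroup.mk' N)).ker := by
  rw [ker_map_of_surjective (QuotientGroup.mk'_surjective N), QuotientGroup.ker_mk',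
    MonoidHom.range_comp, Subgroup.range_subtype]

end Abelianization

theorem stmt2_general (G : Type*) [Group G] (A : Subgroup G) [A.Normal] :
    ∃ φ : A →* (Abelianization.map (QuotientGroup.mk' A)).ker,
      Function.Surjective φ ∧
      (Subgroup.closure {x : G | ∃ a ∈ A, ∃ g : G, x = g * a * g⁻¹ * a⁻¹}).subgroupOf A
        ≤ φ.ker := by
  let ι := Abelianization.of.comp A.subtype
  have hι : ι.range = (Abelianization.map (QuotientGroup.mk' A)).ker :=
    Abelianization.range_of_comp_subtype_eq_ker_map_mk' A
  refine ⟨(MulEquiv.subgroupCongr hι).toMonoidHom.comp ι.rangeRestrict,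
    (MulEquiv.surjective (MulEquiv.subgroupCongr hι)).comp ι.rangeRestrict_surjective, ?_⟩
  have hAQ : Subgroup.closure {x : G | ∃ a ∈ A, ∃ g : G, x = g * a * g⁻¹ * a⁻¹}
      ≤ commutator G := by
    rw [Subgroup.closure_le]
    rintro _ ⟨a, -, g, rfl⟩
    exact Subgroup.commutator_mem_commutator (Subgroup.mem_top g) (Subgroup.mem_top a)
  intro a ha
  rw [MonoidHom.mem_ker]
  ext
  change Abelianization.of (a : G) = 1
  rw [← MonoidHom.mem_ker, Abelianization.ker_of]
  exact hAQ ha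

theorem stmt2 (G : Type*) [Group G] (A : Subgroup G) [A.Normal]
    (hA : ∀ x ∈ A, ∀ y ∈ A, x * y = y * x) :
    ∃ φ : A →* (Abelianization.map (QuotientGroup.mk' A)).ker,
      Function.Surjective φ ∧
      (Subgroup.closure {x : G | ∃ a ∈ A, ∃ g : G, x = g * a * g⁻¹ * a⁻¹}).subgroupOf A
        ≤ φ.ker :=
  stmt2_general G A
end

section
/- (Sah's lemma) Let G be a group, V a G-module, and g a central element of G. Then (g − 1)·H¹(G, V) = 0; that is, for every class c ∈ H¹(G,V), the class of the cocycle x ↦ g·φ(x) − φ(x) is a coboundary, where φ represents c. -/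
theorem Commute.smul_sub_eq_smul_sub_of_cocycle {G V : Type*} [Mul G] [AddCommGroup V] [SMul G V]
    {φ : G → V} (hφ : ∀ x y : G, φ (x * y) = x • φ y + φ x) {g x : G} (h : Commute g x) :
    g • φ x - φ x = x • φ g - φ g := by
  rw [sub_eq_sub_iff_add_eq_add, ← hφ, ← hφ, h.eq]

theorem stmt4 (G : Type*) [Group G] (V : Type*) [AddCommGroup V]
    [DistribMulAction G V]
    (g : G) (hg : ∀ x : G, g * x = x * g)
    (φ : G → V) (hcocycle : ∀ x y : G, φ (x * y) = x • φ y + φ x) :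
    ∃ v : V, ∀ x : G, g • φ x - φ x = x • v - v :=
  ⟨φ g, fun x => Commute.smul_sub_eq_smul_sub_of_cocycle hcocycle (hg x)⟩
end

section
/- Let ℓ be a prime and H a closed subgroup of GL₂(ℤ_ℓ). Suppose the reduction of H modulo ℓ contains a scalar matrix λ̄·Id with λ̄ ∈ 𝔽_ℓ^×. Then H contains a scalar matrix λ·Id for some λ ∈ ℤ_ℓ^× with λ ≡ λ̄ (mod ℓ). -/
/-!
Write `h = u + ℓ B` with `u ∈ ℤ_ℓ` lifting `λ̄`. Since `u` is central, the binomial expansion gives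
`h ^ ℓ ^ k ≡ u ^ ℓ ^ k (mod ℓ ^ (k + 1))`, while `u ^ ℓ ^ k` converges to the Teichmüller lift `λ`
of `λ̄`. Hence `h ^ ℓ ^ k → λ • 1` (and likewise for `h⁻¹`, so the convergence holds in `GL₂`),
and the limit lies in `H` because `H` is closed.
-/

open Filter Topology Polynomial

theorem exists_algebraMap_add_smul_pow_pow {R A : Type*} [CommRing R] [Ring A] [Algebra R A]
    (p : ℕ) (u : R) (a : A) (k : ℕ) :
    ∃ c : A, (algebraMap R A u + (p : R) • a) ^ p ^ k =
      algebraMap R A (u ^ p ^ k) + ((p : R) ^ (k + 1)) • c := by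
  -- `u + p a` lives in the commutative image of `R[X]` under `aeval a`.
  obtain ⟨g, hg⟩ := dvd_sub_pow_of_dvd_sub (p := p) (a := C u + (p : R[X]) * X) (b := C u)
    (by simp) k
  refine ⟨aeval a g, ?_⟩
  have := congrArg (aeval a) hg
  simp only [map_sub, map_pow, map_add, aeval_C, map_mul, map_natCast, aeval_X] at this
  rw [sub_eq_iff_eq_add'] at this
  rw [map_pow, Algebra.smul_def, Algebra.smul_def, map_pow, map_natCast]
  exact this

namespace PadicInt

variable {p : ℕ} [Fact p.Prime]

theorem dvd_iff_toZMod_eq_zero {x : ℤ_[p]} : (p : ℤ_[p]) ∣ x ↔ toZMod x = 0 := by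
  rw [← RingHom.mem_ker, ker_toZMod, maximalIdeal_eq_span_p, Ideal.mem_span_singleton]

theorem isUnit_of_toZMod_ne_zero {x : ℤ_[p]} (hx : toZMod x ≠ 0) : IsUnit x := by
  rwa [← IsLocalRing.notMem_maximalIdeal, ← ker_toZMod, RingHom.mem_ker]

theorem tendsto_pow_mul_zero (c : ℕ → ℤ_[p]) :
    Tendsto (fun k => (p : ℤ_[p]) ^ k * c k) atTop (𝓝 0) := by
  refine squeeze_zero_norm (fun k => ?_) <| tendsto_pow_atTop_nhds_zero_of_lt_one
    (inv_nonneg.2 p.cast_nonneg) (inv_lt_one_of_one_lt₀ (mod_cast (Fact.out : p.Prime).one_lt))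
  rw [norm_mul, norm_pow, norm_p]
  exact mul_le_of_le_one_right (by positivity) (norm_le_one _)

theorem eventually_toZMod_eq_of_tendsto {x : ℕ → ℤ_[p]} {ω : ℤ_[p]}
    (hx : Tendsto x atTop (𝓝 ω)) : ∀ᶠ k in atTop, toZMod (x k) = toZMod ω := by
  filter_upwards [hx.eventually (Metric.ball_mem_nhds ω one_pos)] with k hk
  rwa [dist_eq_norm, norm_lt_one_iff_dvd, dvd_iff_toZMod_eq_zero, map_sub, sub_eq_zero] at hk

/-- The limit `ω` is the Teichmüller lift of `toZMod u`. -/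
theorem exists_tendsto_pow_prime_pow (u : ℤ_[p]) :
    ∃ ω : ℤ_[p], toZMod ω = toZMod u ∧ Tendsto (fun k => u ^ p ^ k) atTop (𝓝 ω) := by
  have hfermat : (p : ℤ_[p]) ∣ u ^ p - u := by
    rw [dvd_iff_toZMod_eq_zero, map_sub, map_pow, ZMod.pow_card, sub_self]
  have hstep (k : ℕ) : ∃ c, u ^ p ^ (k + 1) - u ^ p ^ k = (p : ℤ_[p]) ^ k * c := by
    obtain ⟨c, hc⟩ := dvd_sub_pow_of_dvd_sub hfermat k
    exact ⟨p * c, by rw [pow_succ', pow_mul, hc, pow_succ, mul_assoc]⟩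
  have hcauchy : CauchySeq fun k => u ^ p ^ k := by
    refine cauchySeq_of_le_geometric (p : ℝ)⁻¹ 1
      (inv_lt_one_of_one_lt₀ (mod_cast (Fact.out : p.Prime).one_lt)) fun k => ?_
    obtain ⟨c, hc⟩ := hstep k
    rw [dist_comm, dist_eq_norm, hc, norm_mul, norm_pow, norm_p, one_mul]
    exact mul_le_of_le_one_right (by positivity) (norm_le_one _)
  obtain ⟨ω, hω⟩ := cauchySeq_tendsto_of_complete hcauchy
  obtain ⟨k, hk⟩ := (eventually_toZMod_eq_of_tendsto hω).exists
  refine ⟨ω, ?_, hω⟩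
  rw [← hk, map_pow, ZMod.pow_card_pow]

end PadicInt

theorem Units.exists_tendsto_of_tendsto_val {M α : Type*} [Monoid M] [TopologicalSpace M]
    [T1Space M] [ContinuousMul M] {l : Filter α} [l.NeBot] {x : α → Mˣ} {a b : M}
    (ha : Tendsto (fun k => (x k : M)) l (𝓝 a))
    (hb : Tendsto (fun k => (((x k)⁻¹ : Mˣ) : M)) l (𝓝 b)) :
    ∃ g : Mˣ, (g : M) = a ∧ Tendsto x l (𝓝 g) := by
  have hprod : Tendsto (fun k => embedProduct M (x k)) l (𝓝 (a, MulOpposite.op b)) :=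
    ha.prodMk_nhds (MulOpposite.continuous_op.tendsto _ |>.comp hb)
  obtain ⟨g, hg⟩ := isClosedEmbedding_embedProduct.isClosed_range.mem_of_tendsto hprod
    (Eventually.of_forall fun k => Set.mem_range_self _)
  refine ⟨g, congrArg Prod.fst hg, ?_⟩
  rwa [isInducing_embedProduct.tendsto_nhds_iff, Function.comp_def, hg]

namespace Matrix

theorem tendsto_pow_smul_zero {m n : Type*} {p : ℕ} [Fact p.Prime] (C : ℕ → Matrix m n ℤ_[p]) :
    Tendsto (fun k => (p : ℤ_[p]) ^ k • C k) atTop (𝓝 0) :=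
  tendsto_pi_nhds.2 fun i => tendsto_pi_nhds.2 fun j =>
    PadicInt.tendsto_pow_mul_zero fun k => C k i j

variable {n : Type*} [Fintype n] [DecidableEq n] {p : ℕ} [Fact p.Prime]

theorem exists_eq_algebraMap_add_smul {M : Matrix n n ℤ_[p]} {u : ℤ_[p]}
    (hM : M.map PadicInt.toZMod = PadicInt.toZMod u • 1) :
    ∃ B : Matrix n n ℤ_[p], M = algebraMap ℤ_[p] _ u + (p : ℤ_[p]) • B := by
  have hdvd (i j : n) : (p : ℤ_[p]) ∣ (M - algebraMap ℤ_[p] _ u) i j := by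
    rw [PadicInt.dvd_iff_toZMod_eq_zero, sub_apply, map_sub, ← map_apply (f := PadicInt.toZMod), hM,
      algebraMap_eq_diagonal]
    rcases eq_or_ne i j with rfl | hij <;> simp [*]
  choose B hB using hdvd
  refine ⟨of B, ?_⟩
  ext i j
  simp [← hB]

theorem exists_tendsto_pow_prime_pow {M : Matrix n n ℤ_[p]} {a : ZMod p}
    (hM : M.map PadicInt.toZMod = a • 1) :
    ∃ ω : ℤ_[p], PadicInt.toZMod ω = a ∧ Tendsto (fun k => M ^ p ^ k) atTop (𝓝 (ω • 1)) := by
  obtain ⟨u, rfl⟩ := ZMod.ringHom_surjective PadicInt.toZMod a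
  obtain ⟨B, rfl⟩ := exists_eq_algebraMap_add_smul hM
  obtain ⟨ω, hω, hlim⟩ := PadicInt.exists_tendsto_pow_prime_pow u
  choose C hC using exists_algebraMap_add_smul_pow_pow p u B
  refine ⟨ω, hω, ?_⟩
  simp_rw [hC, pow_succ, mul_smul, Algebra.algebraMap_eq_smul_one]
  simpa using (hlim.smul_const 1).add (tendsto_pow_smul_zero fun k => (p : ℤ_[p]) • C k)

end Matrix

namespace Matrix.GeneralLinearGroup

variable {n : Type*} [Fintype n] [DecidableEq n] {p : ℕ} [Fact p.Prime]

theorem map_toZMod_inv_eq_smul_one {g : GL n ℤ_[p]} {a : (ZMod p)ˣ}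
    (hg : (g : Matrix n n ℤ_[p]).map PadicInt.toZMod = (a : ZMod p) • 1) :
    ((g⁻¹ : GL n ℤ_[p]) : Matrix n n ℤ_[p]).map PadicInt.toZMod =
      ((a⁻¹ : (ZMod p)ˣ) : ZMod p) • 1 := by
  set X := ((g⁻¹ : GL n ℤ_[p]) : Matrix n n ℤ_[p]).map PadicInt.toZMod
  have hX : a • X = 1 := by
    rw [Units.smul_def, ← mul_one X, ← Matrix.mul_smul, ← hg, ← Matrix.map_mul, ← Units.val_mul,
      inv_mul_cancel, Units.val_one, Matrix.map_one _ (map_zero _) (map_one _)]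
  rw [← Units.smul_def, ← hX, inv_smul_smul]

theorem exists_tendsto_pow_prime_pow {g : GL n ℤ_[p]} {a : (ZMod p)ˣ}
    (hg : (g : Matrix n n ℤ_[p]).map PadicInt.toZMod = (a : ZMod p) • 1) :
    ∃ (ω : ℤ_[p]) (s : GL n ℤ_[p]), PadicInt.toZMod ω = a ∧ (s : Matrix n n ℤ_[p]) = ω • 1 ∧
      Tendsto (fun k => g ^ p ^ k) atTop (𝓝 s) := by
  obtain ⟨ω, hω, hlim⟩ := Matrix.exists_tendsto_pow_prime_pow hg
  obtain ⟨_, -, hlim_inv⟩ := Matrix.exists_tendsto_pow_prime_pow (map_toZMod_inv_eq_smul_one hg)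
  simp_rw [← Units.val_pow_eq_pow_val] at hlim
  simp_rw [← Units.val_pow_eq_pow_val, inv_pow] at hlim_inv
  obtain ⟨s, hs, hlim_s⟩ := Units.exists_tendsto_of_tendsto_val hlim hlim_inv
  exact ⟨ω, s, hω, hs, hlim_s⟩

end Matrix.GeneralLinearGroup

/-- A closed subgroup of `GL₂(ℤ_ℓ)` whose reduction mod `ℓ` contains a scalar matrix
`λ̄·Id` contains a scalar matrix `λ·Id` with `λ ≡ λ̄ (mod ℓ)`. -/
theorem stmt7 (p : ℕ) [Fact p.Prime]
    (H : Subgroup (GL (Fin 2) ℤ_[p])) (hH : IsClosed (H : Set (GL (Fin 2) ℤ_[p])))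
    (lbar : (ZMod p)ˣ)
    (hlbar : ∃ h ∈ H, ((h : GL (Fin 2) ℤ_[p]) : Matrix (Fin 2) (Fin 2) ℤ_[p]).map
        (PadicInt.toZMod : ℤ_[p] →+* ZMod p) =
        ((lbar : ZMod p) • (1 : Matrix (Fin 2) (Fin 2) (ZMod p)))) :
    ∃ lam : ℤ_[p]ˣ, PadicInt.toZMod (lam : ℤ_[p]) = (lbar : ZMod p) ∧
      ∃ h ∈ H, ((h : GL (Fin 2) ℤ_[p]) : Matrix (Fin 2) (Fin 2) ℤ_[p]) =
        (lam : ℤ_[p]) • (1 : Matrix (Fin 2) (Fin 2) ℤ_[p]) := by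
  obtain ⟨h, hH_mem, hred⟩ := hlbar
  obtain ⟨ω, s, hω, hs, hlim⟩ := Matrix.GeneralLinearGroup.exists_tendsto_pow_prime_pow hred
  have hω_unit : IsUnit ω := PadicInt.isUnit_of_toZMod_ne_zero (hω ▸ lbar.ne_zero)
  exact ⟨hω_unit.unit, hω, s,
    hH.mem_of_tendsto hlim (Eventually.of_forall fun k => pow_mem hH_mem _), hs⟩
end

section
/- Let ℓ be a prime, d ≥ 0 an integer, H a closed subgroup of GL₂(ℤ_ℓ), and A = ℤ_ℓ[H] the ℤ_ℓ-subalgebra of Mat₂(ℤ_ℓ) generated by H. Let V ⊆ ℤ_ℓ² be an A-submodule containing a vector of ℓ-adic valuation at most d. If H contains all matrices congruent to the identity modulo ℓ^n for some n ≥ 1, then V contains ℓ^{d+n}·ℤ_ℓ². -/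
/-!
For any matrix `M`, the matrix `1 + pⁿ M` is congruent to the identity modulo `pⁿ` and
invertible (its determinant is `1` modulo `p`), so it lies in `H`. Hence `V ∋ (1 + pⁿ M) u - u
= pⁿ M u` for every `u ∈ V`. Taking `u = v` with `v i` of valuation at most `d`, so that
`t v i = pᵈ` for some `t`, and `M` the rank-one matrix `(t w) ⊗ eᵢ`, gives `pᵈ⁺ⁿ w ∈ V`.
-/

open IsLocalRing Matrix

theorem IsDiscreteValuationRing.dvd_pow_of_not_pow_succ_dvd {R : Type*} [CommRing R]
    [IsDomain R] [IsDiscreteValuationRing R] {ϖ x : R} (hϖ : Irreducible ϖ) {d : ℕ}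
    (hx : ¬ ϖ ^ (d + 1) ∣ x) : x ∣ ϖ ^ d := by
  have hx0 : x ≠ 0 := by rintro rfl; exact hx (dvd_zero _)
  obtain ⟨k, u, rfl⟩ := eq_unit_mul_pow_irreducible hx0 hϖ
  have hkd : k ≤ d := by
    by_contra! hdk
    exact hx (Dvd.dvd.mul_left (pow_dvd_pow _ hdk) _)
  exact Units.mul_left_dvd.mpr (pow_dvd_pow _ hkd)

theorem Matrix.isUnit_one_add_of_mem_maximalIdeal {R ι : Type*} [CommRing R] [IsLocalRing R]
    [Fintype ι] [DecidableEq ι] {M : Matrix ι ι R} (hM : ∀ i j, M i j ∈ maximalIdeal R) :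
    IsUnit (1 + M) := by
  have hM0 : M.map (residue R) = 0 := by
    ext i j
    exact (residue_eq_zero_iff _).mpr (hM i j)
  rw [isUnit_iff_isUnit_det, ← residue_ne_zero_iff_isUnit, RingHom.map_det, map_add, map_one,
    RingHom.mapMatrix_apply, hM0, add_zero, det_one]
  exact one_ne_zero

section CongruenceStable

variable {R ι : Type*} [CommRing R] [IsLocalRing R] [Fintype ι] [DecidableEq ι] {c : R}
  {H : Subgroup (GL ι R)} {V : Submodule R (ι → R)}

theorem smul_mulVec_mem_of_congruence_le (hc : c ∈ maximalIdeal R)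
    (hV : ∀ h ∈ H, ∀ v ∈ V, (h : Matrix ι ι R) *ᵥ v ∈ V)
    (hH : ∀ M : GL ι R, (∀ i j, c ∣ (M : Matrix ι ι R) i j - (1 : Matrix ι ι R) i j) → M ∈ H)
    (M : Matrix ι ι R) {u : ι → R} (hu : u ∈ V) : c • (M *ᵥ u) ∈ V := by
  have hunit : IsUnit (1 + c • M) :=
    isUnit_one_add_of_mem_maximalIdeal fun i j => Ideal.mul_mem_right _ _ hc
  have hmem : hunit.unit ∈ H := hH _ fun i j => by simp
  have hAu : (1 + c • M) *ᵥ u ∈ V := hunit.unit_spec ▸ hV _ hmem u hu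
  simpa [add_mulVec, smul_mulVec] using V.sub_mem hAu hu

theorem smul_mem_of_congruence_le (hc : c ∈ maximalIdeal R)
    (hV : ∀ h ∈ H, ∀ v ∈ V, (h : Matrix ι ι R) *ᵥ v ∈ V)
    (hH : ∀ M : GL ι R, (∀ i j, c ∣ (M : Matrix ι ι R) i j - (1 : Matrix ι ι R) i j) → M ∈ H)
    {v : ι → R} (hv : v ∈ V) {i : ι} {a : R} (ha : v i ∣ a) (w : ι → R) : (c * a) • w ∈ V := by
  obtain ⟨t, rfl⟩ := ha
  have key := smul_mulVec_mem_of_congruence_le hc hV hH (vecMulVec (t • w) (Pi.single i 1)) hv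
  rw [vecMulVec_mulVec, single_one_dotProduct] at key
  convert key using 1
  ext j
  simp [mul_comm, mul_left_comm]

end CongruenceStable

theorem stmt8_general (p : ℕ) [Fact p.Prime] (d n : ℕ) (hn : 1 ≤ n)
    (H : Subgroup (GL (Fin 2) ℤ_[p]))
    (V : Submodule ℤ_[p] (Fin 2 → ℤ_[p]))
    (hV : ∀ h ∈ H, ∀ v ∈ V,
        Matrix.mulVec ((h : GL (Fin 2) ℤ_[p]) : Matrix (Fin 2) (Fin 2) ℤ_[p]) v ∈ V)
    (hvec : ∃ v ∈ V, ∃ i : Fin 2, ¬ ((p : ℤ_[p]) ^ (d + 1) ∣ v i))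
    (hfull : ∀ M : GL (Fin 2) ℤ_[p],
        (∀ i j, (p : ℤ_[p]) ^ n ∣
          ((M : Matrix (Fin 2) (Fin 2) ℤ_[p]) i j - (1 : Matrix (Fin 2) (Fin 2) ℤ_[p]) i j))
        → M ∈ H) :
    ∀ w : Fin 2 → ℤ_[p], ((p : ℤ_[p]) ^ (d + n)) • w ∈ V := by
  obtain ⟨v, hv, i, hvi⟩ := hvec
  have hpn : (p : ℤ_[p]) ^ n ∈ maximalIdeal ℤ_[p] :=
    Ideal.pow_mem_of_mem _ PadicInt.irreducible_p.not_isUnit n (by omega)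
  intro w
  rw [pow_add, mul_comm]
  exact smul_mem_of_congruence_le hpn hV hfull hv
    (IsDiscreteValuationRing.dvd_pow_of_not_pow_succ_dvd PadicInt.irreducible_p hvi) w

/-- Let `H ≤ GL₂(ℤ_p)` be closed and `V ⊆ ℤ_p²` a submodule stable under `H` (hence a
module over the algebra `ℤ_p[H]`) containing a vector of valuation at most `d` (i.e. with
some coordinate not divisible by `p^(d+1)`). If `H` contains every matrix congruent to the
identity modulo `p^n` (`n ≥ 1`), then `V ⊇ p^(d+n)·ℤ_p²`. -/
theorem stmt8 (p : ℕ) [Fact p.Prime] (d n : ℕ) (hn : 1 ≤ n)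
    (H : Subgroup (GL (Fin 2) ℤ_[p])) (hH : IsClosed (H : Set (GL (Fin 2) ℤ_[p])))
    (V : Submodule ℤ_[p] (Fin 2 → ℤ_[p]))
    (hV : ∀ h ∈ H, ∀ v ∈ V,
        Matrix.mulVec ((h : GL (Fin 2) ℤ_[p]) : Matrix (Fin 2) (Fin 2) ℤ_[p]) v ∈ V)
    (hvec : ∃ v ∈ V, ∃ i : Fin 2, ¬ ((p : ℤ_[p]) ^ (d + 1) ∣ v i))
    (hfull : ∀ M : GL (Fin 2) ℤ_[p],
        (∀ i j, (p : ℤ_[p]) ^ n ∣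
          ((M : Matrix (Fin 2) (Fin 2) ℤ_[p]) i j - (1 : Matrix (Fin 2) (Fin 2) ℤ_[p]) i j))
        → M ∈ H) :
    ∀ w : Fin 2 → ℤ_[p], ((p : ℤ_[p]) ^ (d + n)) • w ∈ V :=
  stmt8_general p d n hn H V hV hvec hfull
end

section
/- Let ℓ be a prime, d ≥ 0, H a closed subgroup of GL₂(ℤ_ℓ), and A = ℤ_ℓ[H] ⊆ Mat₂(ℤ_ℓ). Let V ⊆ ℤ_ℓ² be an A-submodule containing a vector of valuation at most d. If the reduction of H modulo ℓ acts irreducibly on 𝔽_ℓ², then V contains ℓ^d·ℤ_ℓ². -/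
/-!
Reducing modulo `p` turns `V` into an `H`-stable subspace of `𝔽_p²`. If `V` contains a primitive
vector, that subspace is nonzero, hence everything by irreducibility, so `V + p ℤ_p² = ℤ_p²` and
Nakayama gives `V = ℤ_p²`. In general a vector of valuation `k ≤ d` is `p^k u` with `u` primitive,
and the same argument applied to the `H`-stable module `{x | p^k x ∈ V}` shows `p^k ℤ_p² ⊆ V`.
-/

open IsLocalRing Matrix

theorem exists_eq_pow_smul_of_not_pow_succ_dvd {R ι : Type*} [CommMonoid R] {p : R} {d : ℕ}
    {v : ι → R} {i : ι} (h : ¬ p ^ (d + 1) ∣ v i) :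
    ∃ k ≤ d, ∃ u : ι → R, v = p ^ k • u ∧ ∃ j, ¬ p ∣ u j := by
  induction d generalizing v with
  | zero => exact ⟨0, le_rfl, v, by rw [pow_zero, one_smul], i, by simpa using h⟩
  | succ d ih =>
    by_cases hprim : ∃ j, ¬ p ∣ v j
    · exact ⟨0, Nat.zero_le _, v, by rw [pow_zero, one_smul], hprim⟩
    push Not at hprim
    choose w hw using hprim
    have hv : v = p • w := funext hw
    have hwi : ¬ p ^ (d + 1) ∣ w i := fun hdvd =>
      h (by rw [hv, pow_succ']; exact mul_dvd_mul_left p hdvd)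
    obtain ⟨k, hk, u, rfl, hu⟩ := ih hwi
    exact ⟨k + 1, by omega, u, by rw [hv, pow_succ', mul_smul], hu⟩

section Reduction

variable {R S : Type*} [CommRing R] [CommRing S]

def RingHom.compLeftₛₗ (σ : R →+* S) (ι : Type*) : (ι → R) →ₛₗ[σ] (ι → S) where
  toFun v i := σ (v i)
  map_add' v w := by ext; simp
  map_smul' c v := by ext; simp

theorem RingHom.ker_compLeftₛₗ_le (σ : R →+* S) (ι : Type*) [Fintype ι] :
    LinearMap.ker (σ.compLeftₛₗ ι) ≤ RingHom.ker σ • ⊤ := by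
  classical
  intro v hv
  rw [pi_eq_sum_univ v]
  refine Submodule.sum_mem _ fun i _ => Submodule.smul_mem_smul ?_ Submodule.mem_top
  exact congrFun hv i

theorem RingHom.map_mulVec_compLeftₛₗ (σ : R →+* S) {ι : Type*} [Fintype ι]
    (M : Matrix ι ι R) (v : ι → R) :
    M.map σ *ᵥ σ.compLeftₛₗ ι v = σ.compLeftₛₗ ι (M *ᵥ v) := by
  ext i
  exact (σ.map_mulVec M v i).symm

end Reduction

theorem IsLocalRing.eq_top_of_map_eq_top {R S M N : Type*} [CommRing R] [IsLocalRing R]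
    [Ring S] [AddCommGroup M] [Module R M] [Module.Finite R M] [AddCommGroup N] [Module S N]
    {σ : R →+* S} [RingHomSurjective σ] (f : M →ₛₗ[σ] N)
    (hf : LinearMap.ker f ≤ maximalIdeal R • ⊤) {V : Submodule R M} (hV : V.map f = ⊤) :
    V = ⊤ := by
  have hsup : ⊤ ≤ V ⊔ maximalIdeal R • ⊤ := by
    have hcomap := Submodule.comap_map_eq f V
    rw [hV, Submodule.comap_top] at hcomap
    exact hcomap.le.trans (sup_le_sup_left hf V)
  exact top_le_iff.mp <| Submodule.le_of_le_smul_of_le_jacobson_bot Module.Finite.fg_top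
    (maximalIdeal_le_jacobson ⊥) hsup

theorem eq_top_of_irreducible_reduction {R S ι : Type*} [CommRing R] [IsLocalRing R]
    [CommRing S] [Fintype ι] (σ : R →+* S) [RingHomSurjective σ] (G : Set (Matrix ι ι R))
    (V : Submodule R (ι → R)) (hV : ∀ M ∈ G, ∀ v ∈ V, M *ᵥ v ∈ V)
    (hprim : ∃ v ∈ V, ∃ i, σ (v i) ≠ 0)
    (hirr : ∀ W : Submodule S (ι → S), (∀ M ∈ G, ∀ w ∈ W, M.map σ *ᵥ w ∈ W) → W = ⊥ ∨ W = ⊤) :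
    V = ⊤ := by
  obtain ⟨v, hv, i, hvi⟩ := hprim
  have : Nontrivial S := nontrivial_of_ne _ _ hvi
  let f := σ.compLeftₛₗ ι
  have hstable : ∀ M ∈ G, ∀ w ∈ V.map f, M.map σ *ᵥ w ∈ V.map f := by
    rintro M hM _ ⟨x, hx, rfl⟩
    rw [σ.map_mulVec_compLeftₛₗ]
    exact Submodule.mem_map_of_mem (hV M hM x hx)
  have hne : V.map f ≠ ⊥ := fun hbot =>
    hvi (congrFun ((Submodule.eq_bot_iff _).mp hbot _ (Submodule.mem_map_of_mem hv)) i)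
  refine eq_top_of_map_eq_top f ?_ ((hirr _ hstable).resolve_left hne)
  exact (σ.ker_compLeftₛₗ_le ι).trans
    (Submodule.smul_mono_left (le_maximalIdeal (RingHom.ker_ne_top σ)))

theorem forall_mulVec_mem_comap_smul {R ι : Type*} [CommRing R] [Fintype ι]
    {G : Set (Matrix ι ι R)} {V : Submodule R (ι → R)}
    (hV : ∀ M ∈ G, ∀ v ∈ V, M *ᵥ v ∈ V) (c : R) :
    ∀ M ∈ G, ∀ v ∈ V.comap (c • LinearMap.id), M *ᵥ v ∈ V.comap (c • LinearMap.id) := by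
  intro M hM v hv
  simpa [mulVec_smul] using hV M hM _ hv

instance PadicInt.instRingHomSurjectiveToZMod (p : ℕ) [Fact p.Prime] :
    RingHomSurjective (PadicInt.toZMod : ℤ_[p] →+* ZMod p) :=
  ⟨ZMod.ringHom_surjective _⟩

theorem PadicInt.toZMod_eq_zero_iff {p : ℕ} [Fact p.Prime] (x : ℤ_[p]) :
    PadicInt.toZMod x = 0 ↔ (p : ℤ_[p]) ∣ x := by
  rw [← RingHom.mem_ker, ker_toZMod, maximalIdeal_eq_span_p, Ideal.mem_span_singleton]

theorem stmt9_general (p : ℕ) [Fact p.Prime] (d : ℕ)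
    (H : Subgroup (GL (Fin 2) ℤ_[p]))
    (V : Submodule ℤ_[p] (Fin 2 → ℤ_[p]))
    (hV : ∀ h ∈ H, ∀ v ∈ V,
        Matrix.mulVec ((h : GL (Fin 2) ℤ_[p]) : Matrix (Fin 2) (Fin 2) ℤ_[p]) v ∈ V)
    (hvec : ∃ v ∈ V, ∃ i : Fin 2, ¬ ((p : ℤ_[p]) ^ (d + 1) ∣ v i))
    (hirr : ∀ W : Submodule (ZMod p) (Fin 2 → ZMod p),
        (∀ h ∈ H, ∀ w ∈ W,
          Matrix.mulVec (((h : GL (Fin 2) ℤ_[p]) : Matrix (Fin 2) (Fin 2) ℤ_[p]).map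
            (PadicInt.toZMod : ℤ_[p] →+* ZMod p)) w ∈ W) →
        W = ⊥ ∨ W = ⊤) :
    ∀ w : Fin 2 → ℤ_[p], ((p : ℤ_[p]) ^ d) • w ∈ V := by
  obtain ⟨v, hv, i, hvi⟩ := hvec
  obtain ⟨k, hkd, u, rfl, j, hj⟩ := exists_eq_pow_smul_of_not_pow_succ_dvd hvi
  let G := Units.val '' (H : Set (GL (Fin 2) ℤ_[p]))
  have hG : ∀ M ∈ G, ∀ v ∈ V, M *ᵥ v ∈ V := by
    rintro _ ⟨h, hh, rfl⟩
    exact hV h hh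
  have hVk : V.comap ((p : ℤ_[p]) ^ k • LinearMap.id) = ⊤ :=
    eq_top_of_irreducible_reduction PadicInt.toZMod G _ (forall_mulVec_mem_comap_smul hG _)
      ⟨u, hv, j, mt (PadicInt.toZMod_eq_zero_iff _).mp hj⟩
      fun W hW => hirr W fun h hh => hW _ ⟨h, hh, rfl⟩
  intro w
  have hkw : (p : ℤ_[p]) ^ k • w ∈ V := Submodule.mem_comap.mp (hVk ▸ Submodule.mem_top)
  rw [← Nat.sub_add_cancel hkd, pow_add, mul_smul]
  exact V.smul_mem _ hkw

/-- Let `H ≤ GL₂(ℤ_p)` be closed and `V ⊆ ℤ_p²` a submodule stable under `H` containing a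
vector of valuation at most `d`. If the reduction of `H` modulo `p` acts irreducibly on
`𝔽_p²`, then `V ⊇ p^d·ℤ_p²`. -/
theorem stmt9 (p : ℕ) [Fact p.Prime] (d : ℕ)
    (H : Subgroup (GL (Fin 2) ℤ_[p])) (hH : IsClosed (H : Set (GL (Fin 2) ℤ_[p])))
    (V : Submodule ℤ_[p] (Fin 2 → ℤ_[p]))
    (hV : ∀ h ∈ H, ∀ v ∈ V,
        Matrix.mulVec ((h : GL (Fin 2) ℤ_[p]) : Matrix (Fin 2) (Fin 2) ℤ_[p]) v ∈ V)
    (hvec : ∃ v ∈ V, ∃ i : Fin 2, ¬ ((p : ℤ_[p]) ^ (d + 1) ∣ v i))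
    (hirr : ∀ W : Submodule (ZMod p) (Fin 2 → ZMod p),
        (∀ h ∈ H, ∀ w ∈ W,
          Matrix.mulVec (((h : GL (Fin 2) ℤ_[p]) : Matrix (Fin 2) (Fin 2) ℤ_[p]).map
            (PadicInt.toZMod : ℤ_[p] →+* ZMod p)) w ∈ W) →
        W = ⊥ ∨ W = ⊤) :
    ∀ w : Fin 2 → ℤ_[p], ((p : ℤ_[p]) ^ d) • w ∈ V :=
  stmt9_general p d H V hV hvec hirr
end

section
/- Let ℓ be a prime and suppose that for every n in a cofinal set the image H_{ℓ^n} ⊆ GL₂(ℤ/ℓ^nℤ) of a compatible system of subgroups satisfies: H_{ℓ^{n_ℓ}} ∋ the class of Id + ℓ^{n_ℓ}g for every g ∈ Mat₂(ℤ_ℓ), and ker(H_{ℓ^{n+1}} → H_{ℓ^n}) = {Id + ℓ^n h : h ∈ Mat₂(𝔽_ℓ)} for all n ≥ n_ℓ. Then for every n ≥ n_ℓ and every g ∈ Mat₂(ℤ_ℓ), the reduction of Id + ℓ^{n_ℓ}g modulo ℓ^n lies in H_{ℓ^n}. -/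
/-- Reduction map `GL₂(ℤ/ℓ^(n+1)) → GL₂(ℤ/ℓ^n)`. -/
noncomputable def glRed (ℓ n : ℕ) :
    GL (Fin 2) (ZMod (ℓ ^ (n + 1))) →* GL (Fin 2) (ZMod (ℓ ^ n)) :=
  Units.map ((ZMod.castHom (pow_dvd_pow ℓ (Nat.le_succ n))
    (ZMod (ℓ ^ n))).mapMatrix.toMonoidHom)

/-!
Induction on `n`. Lift the element `x ∈ H_{ℓ^n}` reducing to `Id + ℓ^nℓ g` to some
`y ∈ H_{ℓ^(n+1)}`; then `y = Id + ℓ^nℓ g + ℓ^n E` for some matrix `E`. Maximal growth puts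
`Id - ℓ^n E` into `H_{ℓ^(n+1)}`, and since `ℓ^(2n)` and `ℓ^(n+nℓ)` vanish modulo `ℓ^(n+1)`,
`(Id - ℓ^n E) y = Id + ℓ^nℓ g` there.
-/

namespace ZMod

theorem exists_eq_mul_of_castHom_eq_zero {d N : ℕ} (h : d ∣ N) {a : ZMod N}
    (ha : castHom h (ZMod d) a = 0) : ∃ c : ZMod N, a = d * c := by
  rw [← intCast_zmod_cast a, castHom_apply, cast_intCast h, intCast_zmod_eq_zero_iff_dvd] at ha
  obtain ⟨z, hz⟩ := ha
  exact ⟨z, by rw [← intCast_zmod_cast a, hz]; push_cast; rfl⟩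

end ZMod

namespace Matrix

variable {ι κ : Type*}

theorem exists_eq_add_smul_of_map_castHom_eq {d N : ℕ} (h : d ∣ N) {A B : Matrix ι κ (ZMod N)}
    (hAB : A.map (ZMod.castHom h (ZMod d)) = B.map (ZMod.castHom h (ZMod d))) :
    ∃ E : Matrix ι κ (ZMod N), A = B + (d : ZMod N) • E := by
  have hdiff : ∀ i j, ZMod.castHom h (ZMod d) (A i j - B i j) = 0 := fun i j => by
    rw [map_sub, sub_eq_zero]
    exact congrFun (congrFun hAB i) j
  choose E hE using fun i j => ZMod.exists_eq_mul_of_castHom_eq_zero h (hdiff i j)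
  refine ⟨Matrix.of E, ?_⟩
  ext i j
  simp [← hE]

variable [DecidableEq ι] {R : Type*} [CommRing R]

theorem map_one_add_smul {S : Type*} [CommRing S] (f : R →+* S) (c : R) (A : Matrix ι ι R) :
    (1 + c • A).map f = 1 + f c • A.map f := by
  rw [Matrix.map_add f (map_add f), Matrix.map_one f (map_zero f) (map_one f),
    Matrix.map_smul' f c A (map_mul f)]

variable [Fintype ι]

theorem isUnit_one_sub_smul_of_mul_self_eq_zero {t : R} (ht : t * t = 0) (E : Matrix ι ι R) :
    IsUnit (1 - t • E) :=
  IsNilpotent.isUnit_one_sub ⟨2, by rw [smul_pow, sq, ht, zero_smul]⟩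

theorem one_sub_smul_mul_one_add_smul_add_smul {s t : R} (htt : t * t = 0) (hts : t * s = 0)
    (E G : Matrix ι ι R) : (1 - t • E) * (1 + s • G + t • E) = 1 + s • G := by
  simp only [sub_mul, mul_add, one_mul, mul_one, smul_mul_smul_comm, htt, hts, zero_smul]
  abel

end Matrix

theorem PadicInt.map_castHom_one_add_smul_map_toZModPow {ι : Type*} [DecidableEq ι] (ℓ : ℕ)
    [Fact ℓ.Prime] {m n : ℕ} (h : m ≤ n) (c : ℕ) (g : Matrix ι ι ℤ_[ℓ]) :
    (1 + (ℓ : ZMod (ℓ ^ n)) ^ c • g.map (toZModPow n)).map (ZMod.castHom (pow_dvd_pow ℓ h) _) =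
      1 + (ℓ : ZMod (ℓ ^ m)) ^ c • g.map (toZModPow m) := by
  rw [Matrix.map_one_add_smul, map_pow, map_natCast, Matrix.map_map, ← RingHom.coe_comp,
    zmod_cast_comp_toZModPow m n h]

theorem stmt10_general (ℓ : ℕ) [Fact ℓ.Prime] (nℓ : ℕ) (hnℓ : 1 ≤ nℓ)
    (H : ∀ n : ℕ, Subgroup (GL (Fin 2) (ZMod (ℓ ^ n))))
    (hsurj : ∀ n : ℕ, ∀ y ∈ H n, ∃ x ∈ H (n + 1), glRed ℓ n x = y)
    (hbase : ∀ g : Matrix (Fin 2) (Fin 2) ℤ_[ℓ], ∃ x ∈ H nℓ,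
        ((x : GL (Fin 2) (ZMod (ℓ ^ nℓ))) : Matrix (Fin 2) (Fin 2) (ZMod (ℓ ^ nℓ))) =
          1 + ((ℓ : ZMod (ℓ ^ nℓ)) ^ nℓ) • g.map (PadicInt.toZModPow nℓ))
    (hker : ∀ n : ℕ, nℓ ≤ n → ∀ x : GL (Fin 2) (ZMod (ℓ ^ (n + 1))),
        ((x ∈ H (n + 1) ∧ glRed ℓ n x = 1) ↔
          ∀ i j : Fin 2, ∃ c : ZMod (ℓ ^ (n + 1)),
            ((x : Matrix (Fin 2) (Fin 2) (ZMod (ℓ ^ (n + 1)))) i j -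
              (1 : Matrix (Fin 2) (Fin 2) (ZMod (ℓ ^ (n + 1)))) i j) =
              (ℓ : ZMod (ℓ ^ (n + 1))) ^ n * c)) :
    ∀ n : ℕ, nℓ ≤ n → ∀ g : Matrix (Fin 2) (Fin 2) ℤ_[ℓ], ∃ x ∈ H n,
      ((x : GL (Fin 2) (ZMod (ℓ ^ n))) : Matrix (Fin 2) (Fin 2) (ZMod (ℓ ^ n))) =
        1 + ((ℓ : ZMod (ℓ ^ n)) ^ nℓ) • g.map (PadicInt.toZModPow n) := by
  intro n hn
  induction n, hn using Nat.le_induction with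
  | base => exact hbase
  | succ n hn ih =>
    intro g
    obtain ⟨x, hxH, hx⟩ := ih g
    obtain ⟨y, hyH, rfl⟩ := hsurj n x hxH
    obtain ⟨E, hE⟩ := Matrix.exists_eq_add_smul_of_map_castHom_eq (pow_dvd_pow ℓ n.le_succ)
      (A := (y : Matrix (Fin 2) (Fin 2) (ZMod (ℓ ^ (n + 1)))))
      (B := 1 + (ℓ : ZMod (ℓ ^ (n + 1))) ^ nℓ • g.map (PadicInt.toZModPow (n + 1)))
      (by rw [PadicInt.map_castHom_one_add_smul_map_toZModPow ℓ n.le_succ, ← hx]; rfl)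
    rw [Nat.cast_pow] at hE
    have htt : (ℓ : ZMod (ℓ ^ (n + 1))) ^ n * (ℓ : ZMod (ℓ ^ (n + 1))) ^ n = 0 := by
      rw [← pow_add, ZMod.natCast_pow_eq_zero_of_le ℓ (by omega)]
    have hts : (ℓ : ZMod (ℓ ^ (n + 1))) ^ n * (ℓ : ZMod (ℓ ^ (n + 1))) ^ nℓ = 0 := by
      rw [← pow_add, ZMod.natCast_pow_eq_zero_of_le ℓ (by omega)]
    obtain ⟨k, hk⟩ := Matrix.isUnit_one_sub_smul_of_mul_self_eq_zero htt E
    have hkH : k ∈ H (n + 1) :=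
      ((hker n hn k).mpr fun i j => ⟨-E i j, by simp [hk]⟩).1
    refine ⟨k * y, mul_mem hkH hyH, ?_⟩
    rw [Units.val_mul, hk, hE, Matrix.one_sub_smul_mul_one_add_smul_add_smul htt hts]

/-- If a compatible system of subgroups `H (ℓ^n) ⊆ GL₂(ℤ/ℓ^n)` contains (the class of)
`Id + ℓ^nℓ·g` for all `g ∈ Mat₂(ℤ_ℓ)` at level `nℓ`, and has maximal growth
(`ker(H(ℓ^(n+1)) → H(ℓ^n)) = {Id + ℓ^n h}`) for all `n ≥ nℓ`, then for every `n ≥ nℓ` and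
every `g ∈ Mat₂(ℤ_ℓ)` the reduction of `Id + ℓ^nℓ·g` mod `ℓ^n` lies in `H (ℓ^n)`. -/
theorem stmt10 (ℓ : ℕ) [Fact ℓ.Prime] (nℓ : ℕ) (hnℓ : 1 ≤ nℓ)
    (H : ∀ n : ℕ, Subgroup (GL (Fin 2) (ZMod (ℓ ^ n))))
    (hcompat : ∀ n : ℕ, ∀ x ∈ H (n + 1), glRed ℓ n x ∈ H n)
    (hsurj : ∀ n : ℕ, ∀ y ∈ H n, ∃ x ∈ H (n + 1), glRed ℓ n x = y)
    (hbase : ∀ g : Matrix (Fin 2) (Fin 2) ℤ_[ℓ], ∃ x ∈ H nℓ,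
        ((x : GL (Fin 2) (ZMod (ℓ ^ nℓ))) : Matrix (Fin 2) (Fin 2) (ZMod (ℓ ^ nℓ))) =
          1 + ((ℓ : ZMod (ℓ ^ nℓ)) ^ nℓ) • g.map (PadicInt.toZModPow nℓ))
    (hker : ∀ n : ℕ, nℓ ≤ n → ∀ x : GL (Fin 2) (ZMod (ℓ ^ (n + 1))),
        ((x ∈ H (n + 1) ∧ glRed ℓ n x = 1) ↔
          ∀ i j : Fin 2, ∃ c : ZMod (ℓ ^ (n + 1)),
            ((x : Matrix (Fin 2) (Fin 2) (ZMod (ℓ ^ (n + 1)))) i j -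
              (1 : Matrix (Fin 2) (Fin 2) (ZMod (ℓ ^ (n + 1)))) i j) =
              (ℓ : ZMod (ℓ ^ (n + 1))) ^ n * c)) :
    ∀ n : ℕ, nℓ ≤ n → ∀ g : Matrix (Fin 2) (Fin 2) ℤ_[ℓ], ∃ x ∈ H n,
      ((x : GL (Fin 2) (ZMod (ℓ ^ n))) : Matrix (Fin 2) (Fin 2) (ZMod (ℓ ^ n))) =
        1 + ((ℓ : ZMod (ℓ ^ n)) ^ nℓ) • g.map (PadicInt.toZModPow n) :=
  stmt10_general ℓ nℓ hnℓ H hsurj hbase hker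
end
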